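/- Let V be a d×n real matrix with columns v_1,…,v_n, let C = VᵀV, and let s be an integer with 1 ≤ s ≤ d. For every subset S ⊆ {1,…,n} with |S| = s such that the vectors {v_i}_{i∈S} are linearly independent, one has Γ_s(∑_{i∈S} v_i v_iᵀ) = log det^s(∑_{i∈S} v_i v_iᵀ) = log det(C_{S,S}). (Hence the maximum entropy sampling problem is equivalent to maximizing Γ_s(∑_i x_i v_i v_iᵀ) over binary x with ∑_i x_i = s.) -/

import Mathlib

open Matrix Finset

noncomputable section

/-- `lam` lists the eigenvalues (with multiplicity) of the real symmetric matrix `X`,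
via an orthogonal spectral decomposition. -/
def IsSpectralDecomp {m : Type*} [Fintype m] [DecidableEq m]
    (X : Matrix m m ℝ) (lam : m → ℝ) : Prop :=
  ∃ Q : Matrix m m ℝ, Q * Qᵀ = 1 ∧ X = Q * Matrix.diagonal lam * Qᵀ

/-- Principal submatrix `C_{S,S}`. -/
def subSub {n : ℕ} (C : Matrix (Fin n) (Fin n) ℝ) (S : Finset (Fin n)) :
    Matrix {i // i ∈ S} {i // i ∈ S} ℝ :=
  Matrix.of fun a b => C a.1 b.1

/-- The value `λ_{i+1}` (1-based), i.e. the coordinate of `lam` of 0-based index `i`;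
`0` when out of range. -/
def extVal {d : ℕ} (lam : Fin d → ℝ) : ℕ → ℝ :=
  fun i => if h : i < d then lam ⟨i, h⟩ else 0

/-- `∑_{i=k+1}^d λ_i` (1-based), i.e. the sum of the coordinates of 0-based index `≥ k`. -/
def tailSum {d : ℕ} (lam : Fin d → ℝ) (k : ℕ) : ℝ :=
  ∑ i ∈ Finset.univ.filter (fun i : Fin d => k ≤ (i : ℕ)), lam i

/-- `k = k(λ, s)`: an integer `0 ≤ k < s` with
`λ_k > (1/(s-k)) ∑_{i=k+1}^d λ_i ≥ λ_{k+1}`, with the convention `λ₀ = +∞`. -/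
def IsKIndex {d : ℕ} (lam : Fin d → ℝ) (s k : ℕ) : Prop :=
  k < s ∧ extVal lam k ≤ tailSum lam k / ((s : ℝ) - k) ∧
    (k = 0 ∨ tailSum lam k / ((s : ℝ) - k) < extVal lam (k - 1))

/-- `P` is the Moore–Penrose pseudoinverse of `X`. -/
def IsPseudoInv {d : ℕ} (X P : Matrix (Fin d) (Fin d) ℝ) : Prop :=
  X * P * X = X ∧ P * X * P = P ∧ (X * P)ᵀ = X * P ∧ (P * X)ᵀ = P * X

/-! Let `A` be the `d × S` matrix with columns `vᵢ`, `i ∈ S`, so that `∑_{i∈S} vᵢvᵢᵀ = A Aᵀ` and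
`C_{S,S} = Aᵀ A`. Linear independence gives `rank (A Aᵀ) = s`, so for sorted nonnegative
eigenvalues exactly `λ₁, …, λ_s` are positive. The identity `X^d χ(Aᵀ A) = X^s χ(A Aᵀ)` of
characteristic polynomials then makes `det (Aᵀ A)` the product of these `s` eigenvalues. For
`Γ_s`, the inequality `λ_{k+1} ≤ (1/(s-k)) ∑_{i>k} λᵢ` bounds the average of
`λ_{k+1} ≥ ⋯ ≥ λ_s` by its largest term, so all of them equal the average. -/

open Polynomial in
theorem IsSpectralDecomp.charpoly_eq {m : Type*} [Fintype m] [DecidableEq m]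
    {M : Matrix m m ℝ} {lam : m → ℝ} (h : IsSpectralDecomp M lam) :
    M.charpoly = ∏ i, (X - C (lam i)) := by
  obtain ⟨Q, hQ, rfl⟩ := h
  rw [charpoly_mul_comm, ← Matrix.mul_assoc, mul_eq_one_comm.mp hQ, Matrix.one_mul,
    charpoly_diagonal]

theorem IsSpectralDecomp.rank_eq {m : Type*} [Fintype m] [DecidableEq m]
    {M : Matrix m m ℝ} {lam : m → ℝ} (h : IsSpectralDecomp M lam) :
    M.rank = #{i | lam i ≠ 0} := by
  obtain ⟨Q, hQ, rfl⟩ := h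
  have hQdet : IsUnit Q.det := IsUnit.of_mul_eq_one Qᵀ.det (by rw [← det_mul, hQ, det_one])
  rw [rank_mul_eq_left_of_isUnit_det _ _ (by rwa [det_transpose]),
    rank_mul_eq_right_of_isUnit_det _ _ hQdet, rank_diagonal, Fintype.card_subtype]

open Polynomial in
theorem det_transpose_mul_self_eq_prod {m p : Type*} [Fintype m] [DecidableEq m]
    [Fintype p] [DecidableEq p] (A : Matrix m p ℝ) {lam : m → ℝ}
    (h : IsSpectralDecomp (A * Aᵀ) lam) {T : Finset m} (hT : #T = Fintype.card p)
    (hzero : ∀ i ∉ T, lam i = 0) :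
    (Aᵀ * A).det = ∏ i ∈ T, lam i := by
  have hp : Fintype.card p ≤ Fintype.card m := hT ▸ card_le_univ T
  have hsplit : ∏ i, (X - C (lam i)) = X ^ (Fintype.card m - Fintype.card p) *
      ∏ i ∈ T, (X - C (lam i)) := by
    rw [← prod_mul_prod_compl T, mul_comm,
      prod_congr rfl fun i hi => by rw [hzero i (mem_compl.mp hi), C_0, sub_zero],
      prod_const, card_compl, hT]
  have hchar : (Aᵀ * A).charpoly = ∏ i ∈ T, (X - C (lam i)) := by
    apply (isRegular_X_pow (Fintype.card m - Fintype.card p)).left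
    dsimp only
    rw [← charpoly_mul_comm_of_le A Aᵀ hp, h.charpoly_eq, hsplit]
  rw [det_eq_prod_roots_charpoly_of_splits (hchar ▸ Splits.prod fun i _ => Splits.X_sub_C _),
    hchar, roots_prod _ _ (monic_prod_X_sub_C _ _).ne_zero]
  simp only [roots_X_sub_C, Multiset.bind_singleton, prod_map_val]

theorem pos_iff_lt_of_antitone {d s : ℕ} {lam : Fin d → ℝ} (hanti : Antitone lam)
    (hnn : ∀ i, 0 ≤ lam i) (hcount : #{i | lam i ≠ 0} = s) (i : Fin d) :
    0 < lam i ↔ (i : ℕ) < s := by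
  rw [(hnn i).lt_iff_ne', ← hcount]
  exact (Fin.lt_card_filter_univ_iff_apply_of_imp _ fun i j hji hi =>
    (((hnn i).lt_of_ne' hi).trans_le (hanti hji)).ne').symm

open Real in
theorem IsKIndex.log_prod_eq {d s k : ℕ} {lam : Fin d → ℝ} (hk : IsKIndex lam s k)
    (hanti : Antitone lam) (hnn : ∀ i, 0 ≤ lam i) (hsd : s ≤ d)
    (hpos : ∀ i : Fin d, 0 < lam i ↔ (i : ℕ) < s) :
    log (∏ i ∈ univ.filter (fun i : Fin d => (i : ℕ) < k), lam i)
        + ((s : ℝ) - k) * log (tailSum lam k / ((s : ℝ) - k))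
      = log (∏ i ∈ univ.filter (fun i : Fin d => (i : ℕ) < s), lam i) := by
  obtain ⟨hks, hkavg, -⟩ := hk
  set a := tailSum lam k / ((s : ℝ) - k)
  have hsub : ({i | (i : ℕ) < k} : Finset (Fin d)) ⊆ ({i | (i : ℕ) < s} : Finset (Fin d)) :=
      fun i => by
    simp only [mem_filter, mem_univ, true_and]
    omega
  set T := ({i | (i : ℕ) < s} : Finset (Fin d)) \ ({i | (i : ℕ) < k} : Finset (Fin d))
  have hmemT : ∀ i, i ∈ T ↔ k ≤ (i : ℕ) ∧ (i : ℕ) < s := fun i => by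
    simp only [T, mem_sdiff, mem_filter, mem_univ, true_and]
    omega
  have hcard : #T = s - k := by
    rw [card_sdiff_of_subset hsub, Fin.card_filter_val_lt, Fin.card_filter_val_lt,
      min_eq_right hsd, min_eq_right (hks.le.trans hsd)]
  have hsk : (0 : ℝ) < s - k := sub_pos.mpr (by exact_mod_cast hks)
  have hsum : ∑ i ∈ T, lam i = tailSum lam k := by
    refine sum_subset (fun i hi => ?_) fun i hik hiT => ?_
    · simpa using ((hmemT i).mp hi).1
    · have hsi : s ≤ (i : ℕ) := by
        by_contra! hi
        exact hiT ((hmemT i).mpr ⟨by simpa using hik, hi⟩)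
      exact le_antisymm (not_lt.mp ((hpos i).not.mpr hsi.not_gt)) (hnn i)
  set κ : Fin d := ⟨k, hks.trans_le hsd⟩
  have hle : ∀ i ∈ T, lam i ≤ a := fun i hi =>
    calc lam i ≤ lam κ := hanti ((hmemT i).mp hi).1
      _ = extVal lam k := by rw [extVal, dif_pos κ.2]
      _ ≤ a := hkavg
  have heq : ∀ i ∈ T, lam i = a := (sum_eq_sum_iff_of_le hle).mp <| by
    rw [hsum, sum_const, nsmul_eq_mul, hcard, Nat.cast_sub hks.le, mul_div_cancel₀ _ hsk.ne']
  have ha : 0 < a := heq κ ((hmemT κ).mpr ⟨le_rfl, hks⟩) ▸ (hpos κ).mpr hks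
  have hPk : 0 < ∏ i ∈ univ.filter (fun i : Fin d => (i : ℕ) < k), lam i :=
    prod_pos fun i hi => (hpos i).mpr (by simp at hi; omega)
  rw [← prod_sdiff hsub, prod_congr rfl heq, prod_const, hcard, log_mul (by positivity) hPk.ne',
    log_pow, Nat.cast_sub hks.le, add_comm]

theorem stmt_6_general (d n s : ℕ) (hsd : s ≤ d)
    (V : Matrix (Fin d) (Fin n) ℝ) (S : Finset (Fin n)) (hS : S.card = s)
    (hlin : LinearIndependent ℝ (fun i : {x // x ∈ S} => (fun a => V a i.1)))
    (lam : Fin d → ℝ) (hsort : Antitone lam) (hnn : ∀ i, 0 ≤ lam i)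
    (hdecomp : IsSpectralDecomp
      (∑ i ∈ S, vecMulVec (fun a => V a i) (fun a => V a i)) lam)
    (k : ℕ) (hk : IsKIndex lam s k) :
    Real.log (∏ i ∈ Finset.univ.filter (fun i : Fin d => (i : ℕ) < k), lam i)
        + ((s : ℝ) - k) * Real.log (tailSum lam k / ((s : ℝ) - k))
      = Real.log (∏ i ∈ Finset.univ.filter (fun i : Fin d => (i : ℕ) < s), lam i) ∧
    Real.log (∏ i ∈ Finset.univ.filter (fun i : Fin d => (i : ℕ) < s), lam i)
      = Real.log (subSub (Vᵀ * V) S).det := by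
  set A := V.submatrix id ((↑) : S → Fin n)
  have hAAt : ∑ i ∈ S, vecMulVec (fun a => V a i) (fun a => V a i) = A * Aᵀ := by
    ext a b
    simp only [Matrix.sum_apply, vecMulVec_apply, mul_apply, transpose_apply, A,
      submatrix_apply, id]
    exact (sum_coe_sort S fun i => V a i * V b i).symm
  have hAtA : subSub (Vᵀ * V) S = Aᵀ * A := by
    rw [transpose_submatrix, ← submatrix_mul _ _ _ _ _ Function.bijective_id]
    rfl
  have hrank : A.rank = s := by
    rw [rank_eq_finrank_span_cols, ← hS, ← Fintype.card_coe]
    exact finrank_span_eq_card hlin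
  rw [hAAt] at hdecomp
  have hpos := pos_iff_lt_of_antitone hsort hnn
    (by rw [← hdecomp.rank_eq, rank_self_mul_transpose, hrank])
  refine ⟨hk.log_prod_eq hsort hnn hsd hpos, ?_⟩
  rw [hAtA, det_transpose_mul_self_eq_prod A hdecomp (T := {i | (i : ℕ) < s})
    (by rw [Fin.card_filter_val_lt, min_eq_right hsd, Fintype.card_coe, hS])
    fun i hi => le_antisymm (not_lt.mp ((hpos i).not.mpr (by simpa using hi))) (hnn i)]

/-- For a size-`s` subset `S` whose columns `{vᵢ}_{i∈S}` are linearly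
independent, `Γ_s(∑_{i∈S} vᵢvᵢᵀ) = log det^s(∑_{i∈S} vᵢvᵢᵀ) = log det(C_{S,S})`. -/
theorem stmt_6 (d n s : ℕ) (hs1 : 1 ≤ s) (hsd : s ≤ d)
    (V : Matrix (Fin d) (Fin n) ℝ) (S : Finset (Fin n)) (hS : S.card = s)
    (hlin : LinearIndependent ℝ (fun i : {x // x ∈ S} => (fun a => V a i.1)))
    (lam : Fin d → ℝ) (hsort : Antitone lam) (hnn : ∀ i, 0 ≤ lam i)
    (hdecomp : IsSpectralDecomp
      (∑ i ∈ S, vecMulVec (fun a => V a i) (fun a => V a i)) lam)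
    (k : ℕ) (hk : IsKIndex lam s k) :
    Real.log (∏ i ∈ Finset.univ.filter (fun i : Fin d => (i : ℕ) < k), lam i)
        + ((s : ℝ) - k) * Real.log (tailSum lam k / ((s : ℝ) - k))
      = Real.log (∏ i ∈ Finset.univ.filter (fun i : Fin d => (i : ℕ) < s), lam i) ∧
    Real.log (∏ i ∈ Finset.univ.filter (fun i : Fin d => (i : ℕ) < s), lam i)
      = Real.log (subSub (Vᵀ * V) S).det :=
  stmt_6_general d n s hsd V S hS hlin lam hsort hnn hdecomp k hk
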